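/- The spectrum of the Laplacian Δ₀ on the square lattice equals the real interval [0, 8] (viewed as a subset of ℂ). -/

import Mathlib

/-!
Writing `Δ₀ = 4 - (T₁ + T₁⁻¹ + T₂ + T₂⁻¹)` with the unitary lattice translations `Tᵢ` gives
`‖Δ₀ - 4‖ ≤ 4`; as `Δ₀` is self-adjoint, its spectrum lies in `[0, 8]`. Conversely, for `|z| = 1`
the plane wave `m ↦ z ^ (m₁ + m₂)` is a bounded, non-normalisable eigenfunction of the lattice
Laplacian with eigenvalue `4 - 2 (z + z⁻¹) = 4 - 4 Re z`, which runs through all of `[0, 8]`.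
Its truncations to the squares `[-n, n]²` are approximate eigenvectors: the squared norm grows
like the area `(2n+1)²`, the defect only like the perimeter, so `4 - 2 (z + z⁻¹) - Δ₀` has no
bounded inverse.
-/

open scoped ENNReal

local notation "ℓ²(ℤ²)" => lp (fun _ : ℤ × ℤ => ℂ) 2

section Reindex

variable {α β E : Type*} [NormedAddCommGroup E] {p : ℝ≥0∞}

theorem Memℓp.comp_equiv {f : α → E} (hf : Memℓp f p) (e : β ≃ α) : Memℓp (f ∘ e) p := by
  rcases p.trichotomy with rfl | rfl | hp
  · exact memℓp_zero (hf.finite_dsupport.preimage e.injective.injOn)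
  · exact memℓp_infty (hf.bddAbove.mono (Set.range_comp_subset_range e fun i => ‖f i‖))
  · exact memℓp_gen ((e.summable_iff (f := fun i => ‖f i‖ ^ p.toReal)).2 (hf.summable hp))

namespace lp

def compEquiv (e : β ≃ α) (f : lp (fun _ : α => E) p) : lp (fun _ : β => E) p :=
  ⟨f ∘ e, (lp.memℓp f).comp_equiv e⟩

@[simp]
theorem compEquiv_apply (e : β ≃ α) (f : lp (fun _ : α => E) p) (i : β) :
    compEquiv e f i = f (e i) := rfl

theorem norm_compEquiv (hp : 0 < p.toReal) (e : β ≃ α) (f : lp (fun _ : α => E) p) :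
    ‖compEquiv e f‖ = ‖f‖ := by
  rw [norm_eq_tsum_rpow hp, norm_eq_tsum_rpow hp]
  exact congrArg (· ^ (1 / p.toReal)) (e.tsum_eq fun i => ‖f i‖ ^ p.toReal)

end lp

end Reindex

theorem lp.norm_rpow_le_card_mul_of_forall_notMem_eq_zero {α : Type*} {E : α → Type*}
    [∀ i, NormedAddCommGroup (E i)] {p : ℝ≥0∞} (hp : 0 < p.toReal) {f : lp E p}
    {s : Finset α} (hs : ∀ i ∉ s, f i = 0) {C : ℝ} (hC : ∀ i, ‖f i‖ ≤ C) :
    ‖f‖ ^ p.toReal ≤ s.card * C ^ p.toReal := by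
  rw [lp.norm_rpow_eq_tsum hp, tsum_eq_sum fun i hi => by simp [hs i hi, hp.ne'],
    ← nsmul_eq_mul]
  exact Finset.sum_le_card_nsmul _ _ _ fun i _ =>
    Real.rpow_le_rpow (norm_nonneg _) (hC i) hp.le

theorem ContinuousLinearMap.exists_norm_le_mul_norm_smul_sub_of_notMem_spectrum
    {𝕜 E : Type*} [NontriviallyNormedField 𝕜] [NormedAddCommGroup E] [NormedSpace 𝕜 E]
    {T : E →L[𝕜] E} {c : 𝕜} (hc : c ∉ spectrum 𝕜 T) :
    ∃ C, ∀ f, ‖f‖ ≤ C * ‖c • f - T f‖ := by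
  obtain ⟨u, hu⟩ := spectrum.notMem_iff.1 hc
  refine ⟨‖(↑u⁻¹ : E →L[𝕜] E)‖, fun f => ?_⟩
  have hf : c • f - T f = (u : E →L[𝕜] E) f := by simp [hu, Algebra.algebraMap_eq_smul_one]
  calc ‖f‖ = ‖(↑u⁻¹ * ↑u : E →L[𝕜] E) f‖ := by rw [u.inv_mul]; rfl
    _ ≤ ‖(↑u⁻¹ : E →L[𝕜] E)‖ * ‖(u : E →L[𝕜] E) f‖ := (↑u⁻¹ : E →L[𝕜] E).le_opNorm _
    _ = _ := by rw [hf]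

theorem Int.mem_Icc_sub_one_add_one_prod {j k : ℤ × ℤ} :
    j ∈ Set.Icc (k - 1) (k + 1) ↔ (j.1 - k.1).natAbs ≤ 1 ∧ (j.2 - k.2).natAbs ≤ 1 := by
  simp only [Set.mem_Icc, Prod.le_def, Prod.fst_add, Prod.snd_add, Prod.fst_sub, Prod.snd_sub,
    Prod.fst_one, Prod.snd_one]
  omega

theorem Int.mem_Icc_neg_natCast_prod {n : ℕ} {k : ℤ × ℤ} :
    k ∈ Finset.Icc (-(n : ℤ × ℤ)) n ↔ max k.1.natAbs k.2.natAbs ≤ n := by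
  simp only [Finset.mem_Icc, Prod.le_def, Prod.fst_neg, Prod.snd_neg, Prod.fst_natCast,
    Prod.snd_natCast]
  omega

theorem Int.card_Icc_neg_natCast_prod (n : ℕ) :
    (Finset.Icc (-(n : ℤ × ℤ)) n).card = (2 * n + 1) ^ 2 := by
  rw [Finset.card_Icc_prod, Prod.fst_neg, Prod.snd_neg, Prod.fst_natCast, Prod.snd_natCast,
    Int.card_Icc, show ((n : ℤ) + 1 - -n).toNat = 2 * n + 1 by omega, sq]

namespace SquareLattice

def laplacian (f : ℤ × ℤ → ℂ) (m : ℤ × ℤ) : ℂ :=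
  4 * f m - f (m + (1, 0)) - f (m - (1, 0)) - f (m + (0, 1)) - f (m - (0, 1))

@[simp]
theorem laplacian_zero (m : ℤ × ℤ) : laplacian 0 m = 0 := by
  simp [laplacian]

theorem laplacian_congr {f g : ℤ × ℤ → ℂ} {m : ℤ × ℤ}
    (h : Set.EqOn f g (Set.Icc (m - 1) (m + 1))) : laplacian f m = laplacian g m := by
  have hnear {j : ℤ × ℤ} (hj : (j.1 - m.1).natAbs ≤ 1 ∧ (j.2 - m.2).natAbs ≤ 1) : f j = g j :=
    h (Int.mem_Icc_sub_one_add_one_prod.2 hj)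
  simp only [laplacian]
  rw [hnear (by simp), hnear (by simp), hnear (by simp), hnear (by simp), hnear (by simp)]

theorem norm_laplacian_le {f : ℤ × ℤ → ℂ} {C : ℝ} (hf : ∀ k, ‖f k‖ ≤ C) (m : ℤ × ℤ) :
    ‖laplacian f m‖ ≤ 8 * C := by
  unfold laplacian
  calc _ ≤ ‖4 * f m‖ + ‖f (m + (1, 0))‖ + ‖f (m - (1, 0))‖ + ‖f (m + (0, 1))‖
        + ‖f (m - (0, 1))‖ := by
        refine (norm_sub_le _ _).trans (add_le_add_left ((norm_sub_le _ _).trans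
          (add_le_add_left ((norm_sub_le _ _).trans (add_le_add_left (norm_sub_le _ _) _)) _)) _)
    _ ≤ 4 * C + C + C + C + C := by
        rw [norm_mul, RCLike.norm_ofNat]
        gcongr <;> apply hf
    _ = 8 * C := by ring

noncomputable def planeWave (z : ℂ) (m : ℤ × ℤ) : ℂ := z ^ (m.1 + m.2)

theorem norm_planeWave {z : ℂ} (hz : ‖z‖ = 1) (m : ℤ × ℤ) : ‖planeWave z m‖ = 1 := by
  rw [planeWave, norm_zpow, hz, one_zpow]

theorem laplacian_planeWave {z : ℂ} (hz : z ≠ 0) (m : ℤ × ℤ) :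
    laplacian (planeWave z) m = (4 - 2 * (z + z⁻¹)) * planeWave z m := by
  simp only [laplacian, planeWave, Prod.fst_add, Prod.snd_add, Prod.fst_sub, Prod.snd_sub,
    add_zero, sub_zero, zpow_add₀ hz, zpow_sub₀ hz, zpow_one]
  field_simp
  ring

theorem norm_four_sub_two_mul_add_inv_le {z : ℂ} (hz : ‖z‖ = 1) : ‖4 - 2 * (z + z⁻¹)‖ ≤ 8 :=
  calc ‖4 - 2 * (z + z⁻¹)‖ ≤ ‖(4 : ℂ)‖ + ‖(2 : ℂ)‖ * (‖z‖ + ‖z⁻¹‖) :=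
        (norm_sub_le _ _).trans (by rw [norm_mul]; gcongr; exact norm_add_le _ _)
    _ = 8 := by rw [norm_inv, hz]; norm_num

theorem exists_norm_eq_one_four_sub_two_mul_add_inv_eq {x : ℝ} (hx : x ∈ Set.Icc 0 8) :
    ∃ z : ℂ, ‖z‖ = 1 ∧ 4 - 2 * (z + z⁻¹) = x := by
  set θ := Real.arccos (1 - x / 4)
  have hcos : Real.cos θ = 1 - x / 4 :=
    Real.cos_arccos (by linarith [hx.2]) (by linarith [hx.1])
  refine ⟨Complex.exp (θ * Complex.I), Complex.norm_exp_ofReal_mul_I θ, ?_⟩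
  rw [← Complex.exp_neg, ← neg_mul, ← Complex.two_cos, ← Complex.ofReal_cos, hcos]
  push_cast
  ring

noncomputable def truncatedPlaneWave (z : ℂ) (n : ℕ) : ℓ²(ℤ²) :=
  ∑ m ∈ Finset.Icc (-(n : ℤ × ℤ)) n, lp.single 2 m (planeWave z m)

theorem truncatedPlaneWave_apply (z : ℂ) (n : ℕ) (k : ℤ × ℤ) :
    truncatedPlaneWave z n k =
      if k ∈ Finset.Icc (-(n : ℤ × ℤ)) n then planeWave z k else 0 := by
  simp only [truncatedPlaneWave, lp.coeFn_sum, Finset.sum_apply, lp.single_apply,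
    Pi.single_apply, Finset.sum_ite_eq]

theorem norm_truncatedPlaneWave_sq {z : ℂ} (hz : ‖z‖ = 1) (n : ℕ) :
    ‖truncatedPlaneWave z n‖ ^ 2 = (2 * n + 1) ^ 2 := by
  have h := lp.norm_sum_single (p := 2) (by norm_num) (planeWave z)
    (Finset.Icc (-(n : ℤ × ℤ)) n)
  simp only [ENNReal.toReal_ofNat, Real.rpow_two, norm_planeWave hz, one_pow, Finset.sum_const,
    Int.card_Icc_neg_natCast_prod, nsmul_eq_mul, mul_one] at h
  exact_mod_cast h

theorem norm_truncatedPlaneWave_apply_le {z : ℂ} (hz : ‖z‖ = 1) (n : ℕ) (k : ℤ × ℤ) :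
    ‖truncatedPlaneWave z n k‖ ≤ 1 := by
  rw [truncatedPlaneWave_apply]
  split_ifs
  · exact (norm_planeWave hz k).le
  · simp

variable {Δ : ℓ²(ℤ²) →L[ℂ] ℓ²(ℤ²)}

theorem norm_apply_sub_four_smul_le (hΔ : ∀ f m, Δ f m = laplacian f m) (f : ℓ²(ℤ²)) :
    ‖Δ f - (4 : ℂ) • f‖ ≤ 4 * ‖f‖ := by
  let T (e : ℤ × ℤ ≃ ℤ × ℤ) : ℓ²(ℤ²) := lp.compEquiv e f
  have hT (e) : ‖T e‖ = ‖f‖ := lp.norm_compEquiv (by norm_num) e f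
  have hsum : Δ f - (4 : ℂ) • f = -(T (.addRight (1, 0)) + T (.subRight (1, 0))
      + T (.addRight (0, 1)) + T (.subRight (0, 1))) := by
    ext m
    simp only [lp.coeFn_sub, lp.coeFn_smul, lp.coeFn_neg, lp.coeFn_add, Pi.sub_apply,
      Pi.smul_apply, Pi.neg_apply, Pi.add_apply, smul_eq_mul, hΔ, laplacian, T,
      lp.compEquiv_apply, Equiv.coe_addRight, Equiv.subRight_apply]
    ring
  calc ‖Δ f - (4 : ℂ) • f‖ ≤ ‖T (.addRight (1, 0))‖ + ‖T (.subRight (1, 0))‖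
        + ‖T (.addRight (0, 1))‖ + ‖T (.subRight (0, 1))‖ := by
        rw [hsum, norm_neg]; exact norm_add₄_le
    _ = 4 * ‖f‖ := by simp only [hT]; ring

theorem spectrum_subset_image_Icc (hsa : IsSelfAdjoint Δ) (hΔ : ∀ f m, Δ f m = laplacian f m) :
    spectrum ℂ Δ ⊆ (fun x : ℝ => (x : ℂ)) '' Set.Icc 0 8 := by
  intro z hz
  have hreal : z = z.re := hsa.mem_spectrum_eq_re hz
  have hnorm : ‖Δ - algebraMap ℂ _ 4‖ ≤ 4 :=
    ContinuousLinearMap.opNorm_le_bound _ (by norm_num) fun f => by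
      simpa [Algebra.algebraMap_eq_smul_one] using norm_apply_sub_four_smul_le hΔ f
  have hdist : ‖z - 4‖ ≤ 4 := by
    have hmem : z - 4 ∈ spectrum ℂ (Δ - algebraMap ℂ _ 4) := by
      rw [← spectrum.sub_singleton_eq]
      exact Set.sub_mem_sub hz rfl
    calc ‖z - 4‖ ≤ ‖Δ - algebraMap ℂ _ 4‖ * ‖(1 : ℓ²(ℤ²) →L[ℂ] ℓ²(ℤ²))‖ :=
          spectrum.norm_le_norm_mul_of_mem hmem
      _ ≤ 4 * 1 := by gcongr; exact ContinuousLinearMap.norm_id_le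
      _ = 4 := mul_one 4
  rw [hreal, ← Complex.ofReal_ofNat, ← Complex.ofReal_sub, Complex.norm_real,
    Real.norm_eq_abs, abs_le] at hdist
  exact ⟨z.re, ⟨by linarith, by linarith⟩, hreal.symm⟩

-- Inside `[-n, n]²` the truncation is an exact plane wave, outside `[-(n+1), n+1]²` it vanishes
-- identically; the defect lives on the two boundary layers in between.
theorem smul_truncatedPlaneWave_sub_apply_eq_zero (hΔ : ∀ f m, Δ f m = laplacian f m)
    {z : ℂ} (hz : z ≠ 0) {n : ℕ} {k : ℤ × ℤ} (hk : k ∉ Finset.box n ∪ Finset.box (n + 1)) :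
    ((4 - 2 * (z + z⁻¹)) • truncatedPlaneWave z n - Δ (truncatedPlaneWave z n)) k = 0 := by
  rw [Finset.mem_union, Int.mem_box, Int.mem_box] at hk
  rw [lp.coeFn_sub, lp.coeFn_smul, Pi.sub_apply, Pi.smul_apply, smul_eq_mul, hΔ,
    truncatedPlaneWave_apply, sub_eq_zero]
  rcases lt_or_gt_of_ne (fun h : max k.1.natAbs k.2.natAbs = n => hk (Or.inl h)) with hin | hout
  · have hF : Set.EqOn (truncatedPlaneWave z n) (planeWave z) (Set.Icc (k - 1) (k + 1)) :=
      fun j hj => by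
        have := Int.mem_Icc_sub_one_add_one_prod.1 hj
        rw [truncatedPlaneWave_apply, if_pos (Int.mem_Icc_neg_natCast_prod.2 (by omega))]
    rw [laplacian_congr hF, laplacian_planeWave hz,
      if_pos (Int.mem_Icc_neg_natCast_prod.2 hin.le)]
  · have hF : Set.EqOn (truncatedPlaneWave z n) 0 (Set.Icc (k - 1) (k + 1)) := fun j hj => by
      have := Int.mem_Icc_sub_one_add_one_prod.1 hj
      rw [truncatedPlaneWave_apply, if_neg (by rw [Int.mem_Icc_neg_natCast_prod]; omega),
        Pi.zero_apply]
    rw [laplacian_congr hF, laplacian_zero,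
      if_neg (by rw [Int.mem_Icc_neg_natCast_prod]; omega), mul_zero]

theorem norm_smul_truncatedPlaneWave_sub_sq_le (hΔ : ∀ f m, Δ f m = laplacian f m)
    {z : ℂ} (hz : ‖z‖ = 1) {n : ℕ} (hn : n ≠ 0) :
    ‖(4 - 2 * (z + z⁻¹)) • truncatedPlaneWave z n - Δ (truncatedPlaneWave z n)‖ ^ 2
      ≤ 2048 * (2 * n + 1) := by
  have hbound (k : ℤ × ℤ) :
      ‖((4 - 2 * (z + z⁻¹)) • truncatedPlaneWave z n - Δ (truncatedPlaneWave z n)) k‖ ≤ 16 := by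
    rw [lp.coeFn_sub, lp.coeFn_smul, Pi.sub_apply, Pi.smul_apply, smul_eq_mul, hΔ]
    calc _ ≤ ‖4 - 2 * (z + z⁻¹)‖ * ‖truncatedPlaneWave z n k‖
          + ‖laplacian (truncatedPlaneWave z n) k‖ := by
          rw [← norm_mul]; exact norm_sub_le _ _
      _ ≤ 8 * 1 + 8 * 1 := by
          gcongr
          · exact norm_four_sub_two_mul_add_inv_le hz
          · exact norm_truncatedPlaneWave_apply_le hz n k
          · exact norm_laplacian_le (norm_truncatedPlaneWave_apply_le hz n) k
      _ = 16 := by norm_num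
  have hz0 : z ≠ 0 := norm_ne_zero_iff.1 (hz ▸ one_ne_zero)
  have h := lp.norm_rpow_le_card_mul_of_forall_notMem_eq_zero (p := 2) (by norm_num)
    (fun k hk => smul_truncatedPlaneWave_sub_apply_eq_zero hΔ hz0 hk) hbound
  have hcard : ((Finset.box n ∪ Finset.box (n + 1) : Finset (ℤ × ℤ)).card : ℝ)
      ≤ 8 * n + 8 * (n + 1) := by
    exact_mod_cast (Finset.card_union_le _ _).trans_eq
      (by rw [Int.card_box hn, Int.card_box n.succ_ne_zero])
  simp only [ENNReal.toReal_ofNat, Real.rpow_two] at h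
  nlinarith

theorem four_sub_two_mul_add_inv_mem_spectrum (hΔ : ∀ f m, Δ f m = laplacian f m)
    {z : ℂ} (hz : ‖z‖ = 1) : 4 - 2 * (z + z⁻¹) ∈ spectrum ℂ Δ := by
  by_contra h
  obtain ⟨C, hC⟩ := ContinuousLinearMap.exists_norm_le_mul_norm_smul_sub_of_notMem_spectrum h
  obtain ⟨n, hn⟩ := exists_nat_gt (2048 * C ^ 2)
  have hF := norm_truncatedPlaneWave_sq hz (n + 1)
  have hdefect := norm_smul_truncatedPlaneWave_sub_sq_le hΔ hz n.succ_ne_zero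
  have hsq := pow_le_pow_left₀ (norm_nonneg _) (hC (truncatedPlaneWave z (n + 1))) 2
  rw [mul_pow, hF] at hsq
  push_cast at hsq hdefect
  nlinarith [sq_nonneg C]

end SquareLattice

/-- The spectrum of the Laplacian `Δ₀` on the square lattice `ℤ²`, given by
`(Δ₀ f)(m) = 4 f(m) − f(m+(1,0)) − f(m−(1,0)) − f(m+(0,1)) − f(m−(0,1))`,
equals the real interval `[0, 8]` viewed as a subset of `ℂ`. -/
theorem spectrum_laplacian_square_lattice
    (Δ₀ : lp (fun _ : ℤ × ℤ => ℂ) 2 →L[ℂ] lp (fun _ : ℤ × ℤ => ℂ) 2)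
    (hsa : IsSelfAdjoint Δ₀)
    (hΔ : ∀ f : lp (fun _ : ℤ × ℤ => ℂ) 2, ∀ m : ℤ × ℤ,
      (Δ₀ f) m = 4 * f m - f (m + (1, 0)) - f (m - (1, 0))
        - f (m + (0, 1)) - f (m - (0, 1))) :
    spectrum ℂ Δ₀ = (fun x : ℝ => (x : ℂ)) '' Set.Icc 0 8 := by
  refine (SquareLattice.spectrum_subset_image_Icc hsa hΔ).antisymm ?_
  rintro _ ⟨x, hx, rfl⟩
  obtain ⟨z, hz, hzx⟩ := SquareLattice.exists_norm_eq_one_four_sub_two_mul_add_inv_eq hx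
  simpa only [hzx] using SquareLattice.four_sub_two_mul_add_inv_mem_spectrum hΔ hz
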